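/- arXiv:2109.01727 — 2 statements merged into one kernel-verified Lean document; each statement's English description precedes it below -/
import Mathlib

section
/- For any images w, w' with Δ_W(w, w') < T, applying the LSH-based coarse embedding scheme with embedding length d, flipping bias γ, and coarse threshold k, for any β > 1 with k > d(T + βℓγ)/ℓ, the probability that Sim_LSH(Emb_LSH(w), w') = true is strictly greater than (1 - exp(-2ℓ(β-1)²γ²)) · (1 - exp(-2d(k/d - (T + βℓγ)/ℓ)²)). -/
open Finset

lemma aux_choose_pow (m n : ℕ) (h : m ≤ n) : ∀ r, m.choose r * n ^ r ≤ n.choose r * m ^ r := by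
  intro r
  induction r with
  | zero => simp
  | succ r ih =>
    have key : (m.choose (r+1) * n ^ (r+1)) * (r+1) ≤ (n.choose (r+1) * m ^ (r+1)) * (r+1) := by
      have h1 : m.choose (r+1) * (r+1) = m.choose r * (m - r) := Nat.choose_succ_right_eq m r
      have h2 : n.choose (r+1) * (r+1) = n.choose r * (n - r) := Nat.choose_succ_right_eq n r
      have e1 : (m.choose (r+1) * n ^ (r+1)) * (r+1) = (m.choose r * n ^ r) * ((m - r) * n) := by
        rw [pow_succ, mul_comm (m.choose (r+1)) _, mul_assoc, h1]; ring
      have e2 : (n.choose (r+1) * m ^ (r+1)) * (r+1) = (n.choose r * m ^ r) * ((n - r) * m) := by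
        rw [pow_succ, mul_comm (n.choose (r+1)) _, mul_assoc, h2]; ring
      rw [e1, e2]
      refine Nat.mul_le_mul ih ?_
      have h3 : r * m ≤ r * n := Nat.mul_le_mul_left r h
      calc (m - r) * n = m * n - r * n := by rw [Nat.sub_mul]
        _ ≤ m * n - r * m := Nat.sub_le_sub_left h3 _
        _ ≤ n * m - r * m := by rw [mul_comm]
        _ = (n - r) * m := by rw [Nat.sub_mul]
    exact Nat.le_of_mul_le_mul_right key (Nat.succ_pos r)

lemma aux_sum_powerset_pow {ι : Type*} [DecidableEq ι] (t : Finset ι) (x : ℝ) :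
    ∑ A ∈ t.powerset, x ^ A.card = (x + 1) ^ t.card := by
  rw [Finset.sum_powerset_apply_card, add_pow]
  simp [nsmul_eq_mul, mul_comm]

lemma hoeffding_bernoulli {p t : ℝ} (hp0 : 0 ≤ p) (hp1 : p ≤ 1) (ht : 0 ≤ t) :
    1 - p + p * Real.exp t ≤ Real.exp (t * p + t ^ 2 / 8) := by
  have hD : ∀ x : ℝ, 0 < 1 - p + p * Real.exp x := by
    intro x
    rcases lt_or_ge p 1 with h | h
    · have : 0 ≤ p * Real.exp x := mul_nonneg hp0 (Real.exp_pos x).le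
      linarith
    · have hp : p = 1 := le_antisymm hp1 h
      have := Real.exp_pos x
      rw [hp]; linarith
  have hderivD : ∀ x : ℝ, HasDerivAt (fun x => 1 - p + p * Real.exp x) (p * Real.exp x) x := by
    intro x
    simpa using ((Real.hasDerivAt_exp x).const_mul p).const_add (1 - p)
  set ψ : ℝ → ℝ := fun x => p + x / 4 - p * Real.exp x / (1 - p + p * Real.exp x) with hψdef
  have hψderiv : ∀ x : ℝ,
      HasDerivAt ψ (1/4 - p * Real.exp x * (1 - p) / (1 - p + p * Real.exp x)^2) x := by
    intro x
    have h1 : HasDerivAt (fun x : ℝ => p * Real.exp x) (p * Real.exp x) x :=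
      (Real.hasDerivAt_exp x).const_mul p
    have h2 := h1.div (hderivD x) (ne_of_gt (hD x))
    have h3 : HasDerivAt (fun x : ℝ => p + x / 4) (1/4) x := by
      simpa using ((hasDerivAt_id x).div_const 4).const_add p
    have h4 := h3.sub h2
    have hx := ne_of_gt (hD x)
    exact h4.congr_deriv (by ring)
  have hψmono : Monotone ψ := by
    apply monotone_of_deriv_nonneg
    · exact fun x => (hψderiv x).differentiableAt
    · intro x
      rw [(hψderiv x).deriv]
      have hDx := hD x
      have hE := Real.exp_pos x
      rw [sub_nonneg, div_le_iff₀ (by positivity)]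
      nlinarith [sq_nonneg ((1 - p + p * Real.exp x) - 2 * (p * Real.exp x))]
  have hψ0 : ψ 0 = 0 := by
    simp only [hψdef, Real.exp_zero, mul_one]
    have : 1 - p + p = 1 := by ring
    rw [this]
    ring
  have hψnonneg : ∀ x, 0 ≤ x → 0 ≤ ψ x := fun x hx => hψ0 ▸ hψmono hx
  set φ : ℝ → ℝ := fun x => x * p + x^2/8 - Real.log (1 - p + p * Real.exp x) with hφdef
  have hφderiv : ∀ x : ℝ, HasDerivAt φ (ψ x) x := by
    intro x
    have h1 : HasDerivAt (fun x : ℝ => Real.log (1 - p + p * Real.exp x))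
        (p * Real.exp x / (1 - p + p * Real.exp x)) x := (hderivD x).log (ne_of_gt (hD x))
    have h2 : HasDerivAt (fun x : ℝ => x * p + x^2/8) (p + x/4) x := by
      have ha : HasDerivAt (fun x : ℝ => x * p) p x := by
        simpa using (hasDerivAt_id x).mul_const p
      have hb : HasDerivAt (fun x : ℝ => x^2/8) (x/4) x := by
        have := (hasDerivAt_pow 2 x).div_const 8
        exact this.congr_deriv (by norm_num; ring)
      exact ha.add hb
    exact h2.sub h1
  have hφmono : MonotoneOn φ (Set.Ici (0:ℝ)) := by
    apply monotoneOn_of_deriv_nonneg (convex_Ici 0)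
    · exact fun x _ => (hφderiv x).differentiableAt.continuousAt.continuousWithinAt
    · exact fun x _ => (hφderiv x).differentiableAt.differentiableWithinAt
    · intro x hx
      rw [(hφderiv x).deriv]
      rw [interior_Ici] at hx
      exact hψnonneg x (le_of_lt hx)
  have hφ0 : φ 0 = 0 := by
    simp only [hφdef, Real.exp_zero, mul_one]
    have : 1 - p + p = 1 := by ring
    rw [this, Real.log_one]
    ring
  have hle : φ 0 ≤ φ t := hφmono Set.self_mem_Ici (Set.mem_Ici.2 ht) ht
  rw [hφ0] at hle
  have hlog : Real.log (1 - p + p * Real.exp t) ≤ t * p + t^2/8 := by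
    simp only [hφdef] at hle; linarith
  calc 1 - p + p * Real.exp t = Real.exp (Real.log (1 - p + p * Real.exp t)) :=
        (Real.exp_log (hD t)).symm
    _ ≤ Real.exp (t * p + t ^ 2 / 8) := Real.exp_le_exp.2 hlog

lemma hyper_mgf {n : ℕ} (hn : 0 < n) (d : ℕ) (hdn : d ≤ n) (B : Finset (Fin n)) (a : ℝ)
    (ha : 1 ≤ a) :
    ∑ s ∈ Finset.powersetCard d (Finset.univ : Finset (Fin n)), a ^ (s ∩ B).card
      ≤ (n.choose d : ℝ) * (1 - (B.card : ℝ)/n + (B.card : ℝ)/n * a) ^ d := by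
  have ha0 : (0:ℝ) ≤ a - 1 := by linarith
  set P := Finset.powersetCard d (Finset.univ : Finset (Fin n)) with hP
  set m := B.card with hm
  have hmn : m ≤ n := by
    calc m ≤ (Finset.univ : Finset (Fin n)).card := card_le_card (subset_univ B)
      _ = n := by simp
  set p : ℝ := (m : ℝ) / n with hp
  have hp0 : 0 ≤ p := by positivity
  -- Step 1: expand a^card as a sum over sub-subsets
  have step1 : ∑ s ∈ P, a ^ (s ∩ B).card
      = ∑ s ∈ P, ∑ A ∈ (s ∩ B).powerset, (a - 1) ^ A.card := by
    refine Finset.sum_congr rfl fun s _ => ?_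
    rw [aux_sum_powerset_pow, sub_add_cancel]
  -- Step 2: swap the sums
  have step2 : ∑ s ∈ P, ∑ A ∈ (s ∩ B).powerset, (a - 1) ^ A.card
      = ∑ A ∈ B.powerset, ∑ s ∈ P.filter (fun s => A ⊆ s), (a - 1) ^ A.card := by
    refine Finset.sum_comm' ?_
    intro s A
    simp only [mem_powerset, mem_filter, subset_inter_iff]
    tauto
  -- Step 3/4: bound the count of supersets
  have step4 : ∀ A ∈ B.powerset,
      ((P.filter (fun s => A ⊆ s)).card : ℝ)
        ≤ (if A.card ≤ d then ((n - A.card).choose (d - A.card) : ℝ) else 0) := by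
    intro A _
    by_cases hAd : A.card ≤ d
    · rw [if_pos hAd]
      have hcard : (P.filter (fun s => A ⊆ s)).card
          ≤ (Finset.powersetCard (d - A.card) ((Finset.univ : Finset (Fin n)) \ A)).card := by
        apply Finset.card_le_card_of_injOn (fun s => s \ A)
        · intro s hs
          simp only [hP, Finset.mem_coe, mem_filter, Finset.mem_powersetCard] at hs
          obtain ⟨⟨hsu, hsc⟩, hAs⟩ := hs
          rw [Finset.mem_coe, Finset.mem_powersetCard]
          constructor
          · exact sdiff_subset_sdiff hsu (le_refl A)
          · rw [card_sdiff_of_subset hAs, hsc]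
        · intro s₁ h₁ s₂ h₂ hEq
          simp only [hP, coe_filter, Set.mem_setOf_eq] at h₁ h₂
          have e₁ : s₁ = (s₁ \ A) ∪ A := by rw [sdiff_union_of_subset h₁.2]
          have e₂ : s₂ = (s₂ \ A) ∪ A := by rw [sdiff_union_of_subset h₂.2]
          have hEq' : s₁ \ A = s₂ \ A := hEq
          rw [e₁, e₂, hEq']
      have htarget : (Finset.powersetCard (d - A.card) ((Finset.univ : Finset (Fin n)) \ A)).card
          = (n - A.card).choose (d - A.card) := by
        rw [Finset.card_powersetCard, card_sdiff_of_subset (subset_univ A)]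
        simp
      exact_mod_cast htarget ▸ (Nat.cast_le.2 hcard)
    · rw [if_neg hAd]
      have : P.filter (fun s => A ⊆ s) = ∅ := by
        rw [Finset.filter_eq_empty_iff]
        intro s hs hAs
        simp only [hP, Finset.mem_powersetCard] at hs
        exact hAd (hs.2 ▸ card_le_card hAs)
      rw [this]
      simp
  -- combine: bound the swapped sum
  have step5 : ∑ A ∈ B.powerset, ∑ s ∈ P.filter (fun s => A ⊆ s), (a - 1) ^ A.card
      ≤ ∑ A ∈ B.powerset,
          (if A.card ≤ d then ((n - A.card).choose (d - A.card) : ℝ) else 0) * (a-1)^A.card := by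
    refine Finset.sum_le_sum fun A hA => ?_
    rw [Finset.sum_const, nsmul_eq_mul]
    exact mul_le_mul_of_nonneg_right (step4 A hA) (pow_nonneg ha0 _)
  -- group by cardinality
  have step6 : ∑ A ∈ B.powerset,
        (if A.card ≤ d then ((n - A.card).choose (d - A.card) : ℝ) else 0) * (a-1)^A.card
      = ∑ r ∈ Finset.range (m + 1),
          (m.choose r : ℝ) * ((if r ≤ d then ((n - r).choose (d - r) : ℝ) else 0) * (a-1)^r) := by
    rw [Finset.sum_powerset_apply_card
      (f := fun r => (if r ≤ d then ((n - r).choose (d - r) : ℝ) else 0) * (a-1)^r)]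
    refine Finset.sum_congr rfl fun r _ => ?_
    rw [nsmul_eq_mul]
  -- termwise bound
  have step7 : ∀ r ∈ Finset.range (m + 1),
      (m.choose r : ℝ) * ((if r ≤ d then ((n - r).choose (d - r) : ℝ) else 0) * (a-1)^r)
        ≤ (n.choose d : ℝ) * ((d.choose r : ℝ) * (p * (a-1))^r) := by
    intro r _
    by_cases hrd : r ≤ d
    · rw [if_pos hrd]
      rw [mul_pow]
      have hkey : (m.choose r : ℝ) * ((n - r).choose (d - r) : ℝ)
          ≤ (n.choose d : ℝ) * (d.choose r : ℝ) * p ^ r := by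
        have hnat : m.choose r * (n - r).choose (d - r) * n ^ r
            ≤ n.choose d * d.choose r * m ^ r := by
          rw [Nat.choose_mul (n := n) hrd]
          calc m.choose r * (n - r).choose (d - r) * n ^ r
              = (m.choose r * n ^ r) * (n - r).choose (d - r) := by ring
            _ ≤ (n.choose r * m ^ r) * (n - r).choose (d - r) :=
                Nat.mul_le_mul_right _ (aux_choose_pow m n hmn r)
            _ = n.choose r * (n - r).choose (d - r) * m ^ r := by ring
        have hnr : (0:ℝ) < (n:ℝ)^r := by positivity
        rw [hp]
        rw [div_pow, ← mul_div_assoc, le_div_iff₀ hnr]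
        calc (m.choose r : ℝ) * ((n - r).choose (d - r) : ℝ) * (n:ℝ)^r
            = ((m.choose r * (n - r).choose (d - r) * n ^ r : ℕ) : ℝ) := by push_cast; ring
          _ ≤ ((n.choose d * d.choose r * m ^ r : ℕ) : ℝ) := Nat.cast_le.2 hnat
          _ = (n.choose d : ℝ) * (d.choose r : ℝ) * (m:ℝ)^r := by push_cast; ring
      calc (m.choose r : ℝ) * (((n - r).choose (d - r) : ℝ) * (a-1)^r)
          = ((m.choose r : ℝ) * ((n - r).choose (d - r) : ℝ)) * (a-1)^r := by ring
        _ ≤ ((n.choose d : ℝ) * (d.choose r : ℝ) * p ^ r) * (a-1)^r :=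
            mul_le_mul_of_nonneg_right hkey (pow_nonneg ha0 _)
        _ = (n.choose d : ℝ) * ((d.choose r : ℝ) * (p^r * (a-1)^r)) := by ring
    · rw [if_neg hrd]
      have : (0:ℝ) ≤ (n.choose d : ℝ) * ((d.choose r : ℝ) * (p * (a-1))^r) := by positivity
      simpa using this
  -- sum the binomial series
  have step8 : ∑ r ∈ Finset.range (m + 1), (n.choose d : ℝ) * ((d.choose r : ℝ) * (p * (a-1))^r)
      ≤ (n.choose d : ℝ) * (1 - p + p * a) ^ d := by
    have hterm : ∀ r, (0:ℝ) ≤ (d.choose r : ℝ) * (p * (a-1))^r := by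
      intro r; positivity
    have hsum1 : ∑ r ∈ Finset.range (m + 1), (d.choose r : ℝ) * (p * (a-1))^r
        ≤ ∑ r ∈ Finset.range (m + d + 1), (d.choose r : ℝ) * (p * (a-1))^r := by
      apply Finset.sum_le_sum_of_subset_of_nonneg
      · exact Finset.range_subset_range.2 (by omega)
      · exact fun r _ _ => hterm r
    have hsum2 : ∑ r ∈ Finset.range (m + d + 1), (d.choose r : ℝ) * (p * (a-1))^r
        = ∑ r ∈ Finset.range (d + 1), (d.choose r : ℝ) * (p * (a-1))^r := by
      symm
      apply Finset.sum_subset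
      · exact Finset.range_subset_range.2 (by omega)
      · intro r _ hr
        rw [Finset.mem_range, not_lt] at hr
        rw [Nat.choose_eq_zero_of_lt (by omega)]
        simp
    have hbin : ∑ r ∈ Finset.range (d + 1), (d.choose r : ℝ) * (p * (a-1))^r
        = (1 - p + p * a) ^ d := by
      have : (1:ℝ) - p + p * a = p * (a - 1) + 1 := by ring
      rw [this, add_pow]
      refine Finset.sum_congr rfl fun r _ => ?_
      simp [mul_comm]
    rw [← Finset.mul_sum]
    apply mul_le_mul_of_nonneg_left _ (by positivity)
    rw [← hbin, ← hsum2]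
    exact hsum1
  calc ∑ s ∈ P, a ^ (s ∩ B).card
      = ∑ A ∈ B.powerset, ∑ s ∈ P.filter (fun s => A ⊆ s), (a - 1) ^ A.card := by
        rw [step1, step2]
    _ ≤ ∑ A ∈ B.powerset,
          (if A.card ≤ d then ((n - A.card).choose (d - A.card) : ℝ) else 0) * (a-1)^A.card :=
        step5
    _ = ∑ r ∈ Finset.range (m + 1),
          (m.choose r : ℝ) * ((if r ≤ d then ((n - r).choose (d - r) : ℝ) else 0) * (a-1)^r) :=
        step6
    _ ≤ ∑ r ∈ Finset.range (m + 1), (n.choose d : ℝ) * ((d.choose r : ℝ) * (p * (a-1))^r) :=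
        Finset.sum_le_sum step7
    _ ≤ (n.choose d : ℝ) * (1 - p + p * a) ^ d := step8

lemma aux_sum_fun_bool {N : ℕ} (g : Bool → ℝ) :
    ∑ e : Fin N → Bool, (∏ i, g (e i)) = (g true + g false) ^ N := by
  calc ∑ e : Fin N → Bool, (∏ i, g (e i)) = ∏ _i : Fin N, ∑ b : Bool, g b :=
        (Fintype.prod_sum _).symm
    _ = (g true + g false) ^ N := by simp [Fintype.sum_bool]

set_option maxHeartbeats 1600000 in
/-- For any images whose similarity hashes `v, v'` satisfy `Δ(v, v') < T`,
applying the LSH-based coarse embedding scheme with embedding length `d`,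
flipping bias `γ`, and coarse threshold `k`: for any `β > 1` with
`k > d(T + βℓγ)/ℓ`, the probability (over the uniform choice of a size-`d`
index set and the independent `γ`-biased bit flips) that
`Sim_LSH(Emb_LSH(w), w') = true` is strictly greater than
`(1 - exp(-2ℓ(β-1)²γ²)) · (1 - exp(-2d(k/d - (T + βℓγ)/ℓ)²))`. -/
theorem stmt5 (ℓ d k T : ℕ) (γ β : ℝ) (hγ0 : 0 < γ) (hγ1 : γ ≤ 1)
    (hβ : 1 < β) (hd : 0 < d) (hdℓ : d ≤ ℓ)
    (hk : (d : ℝ) * ((T : ℝ) + β * ℓ * γ) / ℓ < (k : ℝ))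
    (v v' : Fin ℓ → Bool) (hT : hammingDist v v' < T) :
    (1 / (Nat.choose ℓ d : ℝ)) *
      ∑ s ∈ Finset.powersetCard d (Finset.univ : Finset (Fin ℓ)),
        ∑ e : Fin ℓ → Bool,
          (if (s.filter (fun i => xor (e i) (v i) ≠ v' i)).card ≤ k then
            ∏ i, (if e i then γ else 1 - γ) else 0)
      > (1 - Real.exp (-2 * ℓ * (β - 1) ^ 2 * γ ^ 2)) *
        (1 - Real.exp (-2 * d * ((k : ℝ) / d - ((T : ℝ) + β * ℓ * γ) / ℓ) ^ 2)) := by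
  classical
  have hℓ : 0 < ℓ := lt_of_lt_of_le hd hdℓ
  have hℓR : (0:ℝ) < ℓ := by exact_mod_cast hℓ
  have hdR : (0:ℝ) < d := by exact_mod_cast hd
  set C : ℝ := (Nat.choose ℓ d : ℝ) with hCdef
  have hC : 0 < C := by rw [hCdef]; exact_mod_cast Nat.choose_pos hdℓ
  set P := Finset.powersetCard d (Finset.univ : Finset (Fin ℓ)) with hPdef
  set pe : (Fin ℓ → Bool) → ℝ := fun e => ∏ i, (if e i then γ else 1 - γ) with hpedef
  set F : (Fin ℓ → Bool) → ℕ := fun e => (univ.filter (fun i => e i = true)).card with hFdef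
  set G : (Fin ℓ → Bool) → ℕ := fun e =>
    ((P.filter (fun s => (s.filter (fun i => xor (e i) (v i) ≠ v' i)).card ≤ k)).card) with hGdef
  set E1 : ℝ := Real.exp (-2 * ℓ * (β - 1) ^ 2 * γ ^ 2) with hE1def
  set t₀ : ℝ := (k : ℝ) / d - ((T : ℝ) + β * ℓ * γ) / ℓ with ht₀def
  set E2 : ℝ := Real.exp (-2 * d * t₀ ^ 2) with hE2def
  have hpe0 : ∀ e, 0 ≤ pe e := by
    intro e
    refine Finset.prod_nonneg fun i _ => ?_
    split_ifs <;> linarith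
  have hpesum : ∑ e : Fin ℓ → Bool, pe e = 1 := by
    have := aux_sum_fun_bool (N := ℓ) (fun b => if b then γ else 1 - γ)
    simp only [if_true, if_false] at this
    rw [hpedef, this]
    norm_num
  have ht₀ : 0 < t₀ := by
    rw [ht₀def, sub_pos, div_lt_div_iff₀ hℓR hdR]
    calc ((T : ℝ) + β * ℓ * γ) * d = d * ((T : ℝ) + β * ℓ * γ) := by ring
      _ < k * ℓ := by
          rw [div_lt_iff₀ hℓR] at hk
          exact hk
  have hE2lt : E2 < 1 := by
    rw [hE2def]
    apply Real.exp_lt_one_iff.2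
    have h1 : 0 < t₀ ^ 2 := by positivity
    nlinarith
  -- the set of "good" noise vectors
  set a : ℝ := β * ℓ * γ with hadef
  set Good := univ.filter (fun e : Fin ℓ → Bool => (F e : ℝ) ≤ a) with hGooddef
  set L1 : ℝ := 4 * (β - 1) * γ with hL1def
  have hL1 : 0 < L1 := by rw [hL1def]; nlinarith
  -- Chernoff bound for the flips, strict
  have hbad : ∑ e ∈ univ.filter (fun e : Fin ℓ → Bool => ¬ ((F e : ℝ) ≤ a)), pe e < E1 := by
    have hrw : ∑ e ∈ univ.filter (fun e : Fin ℓ → Bool => ¬ ((F e : ℝ) ≤ a)), pe e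
        = ∑ e : Fin ℓ → Bool, (if ¬ ((F e : ℝ) ≤ a) then pe e else 0) :=
      (Finset.sum_filter _ _)
    have hterm : ∀ e : Fin ℓ → Bool,
        (if ¬ ((F e : ℝ) ≤ a) then pe e else 0) ≤ Real.exp (L1 * ((F e : ℝ) - a)) * pe e := by
      intro e
      by_cases h : (F e : ℝ) ≤ a
      · rw [if_neg (not_not_intro h)]
        exact mul_nonneg (Real.exp_pos _).le (hpe0 e)
      · rw [if_pos h]
        push_neg at h
        have h1 : (1:ℝ) ≤ Real.exp (L1 * ((F e : ℝ) - a)) :=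
          Real.one_le_exp (by nlinarith)
        nlinarith [hpe0 e]
    have hstrict : (if ¬ (((F (fun _ => true)) : ℝ) ≤ a) then pe (fun _ => true) else 0)
        < Real.exp (L1 * (((F (fun _ => true)) : ℝ) - a)) * pe (fun _ => true) := by
      have hpet : pe (fun _ => true) = γ ^ ℓ := by
        rw [hpedef]
        simp
      have hFt : F (fun _ => true) = ℓ := by
        rw [hFdef]
        simp
      have hγℓ : (0:ℝ) < γ ^ ℓ := by positivity
      rw [hpet, hFt]
      by_cases h : ((ℓ:ℝ) ≤ a)
      · rw [if_neg (not_not_intro h)]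
        positivity
      · rw [if_pos h]
        push_neg at h
        have : (1:ℝ) < Real.exp (L1 * ((ℓ:ℝ) - a)) := by
          rw [← Real.exp_zero]
          apply Real.exp_lt_exp.2
          nlinarith
        nlinarith
    have hlt : ∑ e : Fin ℓ → Bool, (if ¬ ((F e : ℝ) ≤ a) then pe e else 0)
        < ∑ e : Fin ℓ → Bool, Real.exp (L1 * ((F e : ℝ) - a)) * pe e := by
      apply Finset.sum_lt_sum (fun e _ => hterm e)
      exact ⟨(fun _ => true), Finset.mem_univ _, hstrict⟩
    have hmgf : ∑ e : Fin ℓ → Bool, Real.exp (L1 * ((F e : ℝ) - a)) * pe e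
        = Real.exp (-(L1 * a)) * (γ * Real.exp L1 + (1 - γ)) ^ ℓ := by
      have hfac : ∀ e : Fin ℓ → Bool, Real.exp (L1 * ((F e : ℝ) - a)) * pe e
          = Real.exp (-(L1 * a)) * ∏ i, (if e i then γ * Real.exp L1 else 1 - γ) := by
        intro e
        have hsplit : ∏ i, (if e i then γ * Real.exp L1 else 1 - γ)
            = (∏ i, (if e i then Real.exp L1 else 1)) * pe e := by
          rw [hpedef, ← Finset.prod_mul_distrib]
          refine Finset.prod_congr rfl fun i _ => ?_
          by_cases h : e i <;> simp [h] <;> ring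
        have hexp : ∏ i, (if e i then Real.exp L1 else (1:ℝ)) = Real.exp ((F e : ℝ) * L1) := by
          rw [Finset.prod_ite, Finset.prod_const, Finset.prod_const, one_pow, mul_one,
            ← Real.exp_nat_mul]
        have harg : Real.exp (L1 * ((F e : ℝ) - a))
            = Real.exp (-(L1 * a)) * Real.exp ((F e : ℝ) * L1) := by
          rw [← Real.exp_add]
          congr 1
          ring
        rw [hsplit, harg, hexp]
        ring
      rw [Finset.sum_congr rfl (fun e _ => hfac e), ← Finset.mul_sum]
      congr 1
      have := aux_sum_fun_bool (N := ℓ) (fun b => if b then γ * Real.exp L1 else 1 - γ)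
      simp only [if_true, if_false] at this
      exact this
    have hhoef : (γ * Real.exp L1 + (1 - γ)) ^ ℓ ≤ Real.exp (ℓ * (L1 * γ + L1 ^ 2 / 8)) := by
      have h1 : γ * Real.exp L1 + (1 - γ) = 1 - γ + γ * Real.exp L1 := by ring
      have h2 := hoeffding_bernoulli (le_of_lt hγ0) hγ1 (le_of_lt hL1)
      have h3 : (0:ℝ) ≤ γ * Real.exp L1 + (1 - γ) := by
        have := Real.exp_pos L1
        nlinarith
      calc (γ * Real.exp L1 + (1 - γ)) ^ ℓ
          ≤ (Real.exp (L1 * γ + L1 ^ 2 / 8)) ^ ℓ := by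
            apply pow_le_pow_left₀ h3
            rw [h1]; exact h2
        _ = Real.exp (ℓ * (L1 * γ + L1 ^ 2 / 8)) := (Real.exp_nat_mul _ ℓ).symm
    have hfinal : Real.exp (-(L1 * a)) * (γ * Real.exp L1 + (1 - γ)) ^ ℓ ≤ E1 := by
      calc Real.exp (-(L1 * a)) * (γ * Real.exp L1 + (1 - γ)) ^ ℓ
          ≤ Real.exp (-(L1 * a)) * Real.exp (ℓ * (L1 * γ + L1 ^ 2 / 8)) := by
            apply mul_le_mul_of_nonneg_left hhoef (Real.exp_pos _).le
        _ = Real.exp (-(L1 * a) + ℓ * (L1 * γ + L1 ^ 2 / 8)) := (Real.exp_add _ _).symm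
        _ = E1 := by
            rw [hE1def]
            congr 1
            rw [hL1def, hadef]
            ring
    rw [hrw]
    calc ∑ e : Fin ℓ → Bool, (if ¬ ((F e : ℝ) ≤ a) then pe e else 0)
        < ∑ e : Fin ℓ → Bool, Real.exp (L1 * ((F e : ℝ) - a)) * pe e := hlt
      _ = Real.exp (-(L1 * a)) * (γ * Real.exp L1 + (1 - γ)) ^ ℓ := hmgf
      _ ≤ E1 := hfinal
  -- good part sums to more than 1 - E1
  have hgoodsum : 1 - E1 < ∑ e ∈ Good, pe e := by
    have hsplit := Finset.sum_filter_add_sum_filter_not univ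
      (fun e : Fin ℓ → Bool => (F e : ℝ) ≤ a) pe
    rw [hpesum] at hsplit
    rw [hGooddef]
    linarith
  -- hypergeometric bound for each good e
  have hGbound : ∀ e ∈ Good, C * (1 - E2) ≤ (G e : ℝ) := by
    intro e he
    rw [hGooddef, Finset.mem_filter] at he
    obtain ⟨-, hFe⟩ := he
    set B := univ.filter (fun i => xor (e i) (v i) ≠ v' i) with hBdef
    set m := B.card with hmdef
    have hmℓ : m ≤ ℓ := by
      calc m ≤ (univ : Finset (Fin ℓ)).card := card_le_card (filter_subset _ _)
        _ = ℓ := by simp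
    have hmbound : (m : ℝ) ≤ (T : ℝ) - 1 + a := by
      have hsub : B ⊆ (univ.filter (fun i => v i ≠ v' i)) ∪ (univ.filter (fun i => e i = true)) := by
        intro i hi
        rw [hBdef, Finset.mem_filter] at hi
        rw [Finset.mem_union, Finset.mem_filter, Finset.mem_filter]
        by_cases h : e i = true
        · exact Or.inr ⟨Finset.mem_univ _, h⟩
        · left
          refine ⟨Finset.mem_univ _, ?_⟩
          have hei : e i = false := by
            cases hei : e i
            · rfl
            · exact absurd hei h
          intro hvv
          apply hi.2
          rw [hei, hvv]
          simp
      have hcard : m ≤ hammingDist v v' + F e := by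
        calc m ≤ ((univ.filter (fun i => v i ≠ v' i)) ∪ (univ.filter (fun i => e i = true))).card :=
              card_le_card hsub
          _ ≤ (univ.filter (fun i => v i ≠ v' i)).card + (univ.filter (fun i => e i = true)).card :=
              card_union_le _ _
          _ = hammingDist v v' + F e := rfl
      have hham : (hammingDist v v' : ℝ) ≤ (T : ℝ) - 1 := by
        have : hammingDist v v' + 1 ≤ T := hT
        have := (Nat.cast_le (α := ℝ)).2 this
        push_cast at this
        linarith
      calc (m : ℝ) ≤ (hammingDist v v' : ℝ) + (F e : ℝ) := by exact_mod_cast hcard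
        _ ≤ ((T : ℝ) - 1) + a := by linarith
        _ = (T : ℝ) - 1 + a := by ring
    set L2 : ℝ := 4 * t₀ with hL2def
    have hL2 : 0 < L2 := by rw [hL2def]; linarith
    set a₂ : ℝ := Real.exp L2 with ha₂def
    have ha₂ : 1 ≤ a₂ := Real.one_le_exp (le_of_lt hL2)
    -- split the count
    have hGsplit : G e + (P.filter (fun s =>
        ¬ ((s.filter (fun i => xor (e i) (v i) ≠ v' i)).card ≤ k))).card = P.card := by
      rw [hGdef]
      exact Finset.card_filter_add_card_filter_not _
    have hPcard : P.card = Nat.choose ℓ d := by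
      rw [hPdef, Finset.card_powersetCard]
      simp
    -- bound the bad count
    have hbadcount : ((P.filter (fun s =>
        ¬ ((s.filter (fun i => xor (e i) (v i) ≠ v' i)).card ≤ k))).card : ℝ) ≤ C * E2 := by
      have hfs : ∀ s : Finset (Fin ℓ), s.filter (fun i => xor (e i) (v i) ≠ v' i) = s ∩ B := by
        intro s
        rw [hBdef]
        ext i
        simp [Finset.mem_filter, Finset.mem_inter]
      have step1 : ((P.filter (fun s =>
          ¬ ((s.filter (fun i => xor (e i) (v i) ≠ v' i)).card ≤ k))).card : ℝ)
          ≤ ∑ s ∈ P, Real.exp (L2 * (((s ∩ B).card : ℝ) - k)) := by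
        rw [Finset.card_eq_sum_ones, Nat.cast_sum]
        push_cast
        calc ∑ s ∈ P.filter (fun s =>
              ¬ ((s.filter (fun i => xor (e i) (v i) ≠ v' i)).card ≤ k)), (1:ℝ)
            ≤ ∑ s ∈ P.filter (fun s =>
              ¬ ((s.filter (fun i => xor (e i) (v i) ≠ v' i)).card ≤ k)),
                Real.exp (L2 * (((s ∩ B).card : ℝ) - k)) := by
              refine Finset.sum_le_sum fun s hs => ?_
              rw [Finset.mem_filter] at hs
              have hks : k < (s.filter (fun i => xor (e i) (v i) ≠ v' i)).card := by
                omega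
              rw [hfs s] at hks
              apply Real.one_le_exp
              have : (k : ℝ) + 1 ≤ ((s ∩ B).card : ℝ) := by exact_mod_cast hks
              nlinarith
          _ ≤ ∑ s ∈ P, Real.exp (L2 * (((s ∩ B).card : ℝ) - k)) := by
              apply Finset.sum_le_sum_of_subset_of_nonneg (Finset.filter_subset _ _)
              intro s _ _
              positivity
      have step2 : ∑ s ∈ P, Real.exp (L2 * (((s ∩ B).card : ℝ) - k))
          = Real.exp (-(L2 * k)) * ∑ s ∈ P, a₂ ^ (s ∩ B).card := by
        rw [Finset.mul_sum]
        refine Finset.sum_congr rfl fun s _ => ?_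
        rw [ha₂def, ← Real.exp_nat_mul, ← Real.exp_add]
        congr 1
        ring
      have step3 : ∑ s ∈ P, a₂ ^ (s ∩ B).card
          ≤ C * (1 - (m : ℝ)/ℓ + (m : ℝ)/ℓ * a₂) ^ d := by
        rw [hPdef]
        exact hyper_mgf hℓ d hdℓ B a₂ ha₂
      have step4 : (1 - (m : ℝ)/ℓ + (m : ℝ)/ℓ * a₂) ^ d
          ≤ Real.exp (d * (L2 * ((m : ℝ)/ℓ) + L2 ^ 2 / 8)) := by
        have hpm0 : (0:ℝ) ≤ (m : ℝ)/ℓ := div_nonneg (Nat.cast_nonneg _) hℓR.le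
        have hpm1 : (m : ℝ)/ℓ ≤ 1 := by
          rw [div_le_one hℓR]
          exact_mod_cast hmℓ
        have h2 := hoeffding_bernoulli hpm0 hpm1 (le_of_lt hL2)
        have h3 : (0:ℝ) ≤ 1 - (m : ℝ)/ℓ + (m : ℝ)/ℓ * a₂ := by nlinarith
        calc (1 - (m : ℝ)/ℓ + (m : ℝ)/ℓ * a₂) ^ d
            ≤ (Real.exp (L2 * ((m : ℝ)/ℓ) + L2 ^ 2 / 8)) ^ d := by
              apply pow_le_pow_left₀ h3
              rw [ha₂def]
              exact h2
          _ = Real.exp (d * (L2 * ((m : ℝ)/ℓ) + L2 ^ 2 / 8)) := (Real.exp_nat_mul _ d).symm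
      have step5 : Real.exp (-(L2 * k)) * Real.exp (d * (L2 * ((m : ℝ)/ℓ) + L2 ^ 2 / 8)) ≤ E2 := by
        rw [← Real.exp_add, hE2def]
        apply Real.exp_le_exp.2
        have hkd : (k : ℝ) = d * ((k:ℝ)/d) := by field_simp
        have hmT : (m : ℝ)/ℓ ≤ ((T : ℝ) + a)/ℓ := by
          gcongr
          linarith
        have hexpand : -(L2 * k) + d * (L2 * ((m : ℝ)/ℓ) + L2 ^ 2 / 8)
            = -L2 * ((k:ℝ) - d * ((m:ℝ)/ℓ)) + d * L2 ^ 2 / 8 := by ring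
        have hgap : d * t₀ ≤ (k:ℝ) - d * ((m:ℝ)/ℓ) := by
          have : d * ((m:ℝ)/ℓ) ≤ d * (((T : ℝ) + a)/ℓ) :=
            mul_le_mul_of_nonneg_left hmT (le_of_lt hdR)
          calc d * t₀ = d * ((k:ℝ)/d) - d * (((T : ℝ) + a)/ℓ) := by
                rw [ht₀def, hadef]; ring
            _ = (k:ℝ) - d * (((T : ℝ) + a)/ℓ) := by rw [← hkd]
            _ ≤ (k:ℝ) - d * ((m:ℝ)/ℓ) := by linarith
        rw [hexpand]
        have hL2t : L2 ^ 2 = 16 * t₀ ^ 2 := by rw [hL2def]; ring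
        calc -L2 * ((k:ℝ) - d * ((m:ℝ)/ℓ)) + d * L2 ^ 2 / 8
            ≤ -L2 * (d * t₀) + d * L2 ^ 2 / 8 := by
              have := mul_le_mul_of_nonneg_left hgap (le_of_lt hL2)
              nlinarith
          _ = -2 * d * t₀ ^ 2 := by rw [hL2def]; ring
      calc ((P.filter (fun s =>
          ¬ ((s.filter (fun i => xor (e i) (v i) ≠ v' i)).card ≤ k))).card : ℝ)
          ≤ ∑ s ∈ P, Real.exp (L2 * (((s ∩ B).card : ℝ) - k)) := step1
        _ = Real.exp (-(L2 * k)) * ∑ s ∈ P, a₂ ^ (s ∩ B).card := step2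
        _ ≤ Real.exp (-(L2 * k)) * (C * (1 - (m : ℝ)/ℓ + (m : ℝ)/ℓ * a₂) ^ d) := by
            apply mul_le_mul_of_nonneg_left step3 (Real.exp_pos _).le
        _ ≤ Real.exp (-(L2 * k)) * (C * Real.exp (d * (L2 * ((m : ℝ)/ℓ) + L2 ^ 2 / 8))) := by
            apply mul_le_mul_of_nonneg_left _ (Real.exp_pos _).le
            exact mul_le_mul_of_nonneg_left step4 (le_of_lt hC)
        _ = C * (Real.exp (-(L2 * k)) * Real.exp (d * (L2 * ((m : ℝ)/ℓ) + L2 ^ 2 / 8))) := by ring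
        _ ≤ C * E2 := mul_le_mul_of_nonneg_left step5 (le_of_lt hC)
    -- conclude
    have hGreal : (G e : ℝ) = C - ((P.filter (fun s =>
        ¬ ((s.filter (fun i => xor (e i) (v i) ≠ v' i)).card ≤ k))).card : ℝ) := by
      have := hGsplit
      rw [hPcard] at this
      have := (Nat.cast_inj (R := ℝ)).2 this
      push_cast at this
      rw [hCdef]
      linarith
    rw [hGreal]
    linarith
  -- final assembly
  have hLHS : ∑ s ∈ P, ∑ e : Fin ℓ → Bool,
      (if (s.filter (fun i => xor (e i) (v i) ≠ v' i)).card ≤ k then pe e else 0)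
      = ∑ e : Fin ℓ → Bool, (G e : ℝ) * pe e := by
    rw [Finset.sum_comm]
    refine Finset.sum_congr rfl fun e _ => ?_
    rw [hGdef, ← Finset.sum_filter, Finset.sum_const, nsmul_eq_mul]
  have hdrop : ∑ e ∈ Good, (G e : ℝ) * pe e ≤ ∑ e : Fin ℓ → Bool, (G e : ℝ) * pe e := by
    apply Finset.sum_le_sum_of_subset_of_nonneg (Finset.filter_subset _ _)
    intro e _ _
    exact mul_nonneg (Nat.cast_nonneg _) (hpe0 e)
  have hterm2 : ∀ e ∈ Good, (C * (1 - E2)) * pe e ≤ (G e : ℝ) * pe e := by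
    intro e he
    exact mul_le_mul_of_nonneg_right (hGbound e he) (hpe0 e)
  have hfin : (1 - E1) * (1 - E2) < (1 / C) * ∑ e : Fin ℓ → Bool, (G e : ℝ) * pe e := by
    have h1 : (1 - E1) * (1 - E2) < (∑ e ∈ Good, pe e) * (1 - E2) := by
      apply mul_lt_mul_of_pos_right hgoodsum
      linarith
    have h2 : (∑ e ∈ Good, pe e) * (1 - E2) = (1 / C) * ∑ e ∈ Good, (C * (1 - E2)) * pe e := by
      rw [Finset.sum_mul, Finset.mul_sum]
      refine Finset.sum_congr rfl fun e _ => ?_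
      field_simp
    have h3 : (1 / C) * ∑ e ∈ Good, (C * (1 - E2)) * pe e
        ≤ (1 / C) * ∑ e ∈ Good, (G e : ℝ) * pe e := by
      apply mul_le_mul_of_nonneg_left _ (by positivity)
      exact Finset.sum_le_sum hterm2
    have h4 : (1 / C) * ∑ e ∈ Good, (G e : ℝ) * pe e
        ≤ (1 / C) * ∑ e : Fin ℓ → Bool, (G e : ℝ) * pe e := by
      apply mul_le_mul_of_nonneg_left hdrop (by positivity)
    calc (1 - E1) * (1 - E2) < (∑ e ∈ Good, pe e) * (1 - E2) := h1
      _ = (1 / C) * ∑ e ∈ Good, (C * (1 - E2)) * pe e := h2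
      _ ≤ (1 / C) * ∑ e ∈ Good, (G e : ℝ) * pe e := h3
      _ ≤ (1 / C) * ∑ e : Fin ℓ → Bool, (G e : ℝ) * pe e := h4
  rw [gt_iff_lt]
  calc (1 - E1) * (1 - Real.exp (-2 * d * ((k : ℝ) / d - ((T : ℝ) + β * ℓ * γ) / ℓ) ^ 2))
      = (1 - E1) * (1 - E2) := by rw [hE2def, ht₀def]
    _ < (1 / C) * ∑ e : Fin ℓ → Bool, (G e : ℝ) * pe e := hfin
    _ = (1 / C) * ∑ s ∈ P, ∑ e : Fin ℓ → Bool,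
          (if (s.filter (fun i => xor (e i) (v i) ≠ v' i)).card ≤ k then pe e else 0) := by
        rw [hLHS]
end

section
/- With the q-query posterior formula for repeated embeddings of the same image using independently sampled index sets, if the prior D_F assigns positive probability to v_adv and to at least one other hash, then as q → ∞ the posterior Pr[F(w) = v_adv | (I_1,p_1),...,(I_q,p_q)] converges almost surely to 1 when F(w) = v_adv and γ < 1/2, provided every index is sampled infinitely often. -/
set_option maxHeartbeats 1000000

open MeasureTheory Filter Finset ProbabilityTheory

namespace Stmt19Aux


abbrev E (ℓ d : ℕ) := (Fin d → Fin ℓ) × (Fin d → Bool)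

noncomputable def W (ℓ d : ℕ) (γ : ℝ) (a : E ℓ d) : ℝ :=
  (if Function.Injective a.1 then (1 : ℝ) / (Nat.descFactorial ℓ d) else 0) *
    ∏ i, (if a.2 i then γ else 1 - γ)

variable {ℓ d : ℕ} {γ : ℝ}

lemma W_nonneg (hγ0 : 0 ≤ γ) (hγ1 : γ ≤ 1) (a : E ℓ d) :
    0 ≤ W ℓ d γ a := by
  apply mul_nonneg
  · positivity
  · exact Finset.prod_nonneg fun i _ => by split <;> linarith

lemma W_sum_one (hdℓ : d ≤ ℓ) :
    ∑ a : E ℓ d, W ℓ d γ a = 1 := by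
  classical
  have hdesc : (0 : ℕ) < Nat.descFactorial ℓ d := by
    rcases Nat.eq_zero_or_pos (Nat.descFactorial ℓ d) with h | h
    · exact absurd (Nat.descFactorial_eq_zero_iff_lt.1 h) (not_lt.2 hdℓ)
    · exact h
  rw [Fintype.sum_prod_type]
  have h1 : ∑ I : Fin d → Fin ℓ,
      (if Function.Injective I then (1 : ℝ) / (Nat.descFactorial ℓ d) else 0) = 1 := by
    rw [Finset.sum_ite, Finset.sum_const, Finset.sum_const_zero, add_zero]
    have hcard : (Finset.univ.filter fun I : Fin d → Fin ℓ =>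
        Function.Injective I).card = Nat.descFactorial ℓ d := by
      rw [← Fintype.card_subtype]
      rw [Fintype.card_congr (Equiv.subtypeInjectiveEquivEmbedding (Fin d) (Fin ℓ))]
      rw [Fintype.card_embedding_eq, Fintype.card_fin, Fintype.card_fin]
    rw [hcard, nsmul_eq_mul]
    field_simp
  have h2 : ∑ p : Fin d → Bool, ∏ i, (if p i then γ else 1 - γ) = 1 := by
    have key := (Finset.prod_univ_sum (fun _ : Fin d => (Finset.univ : Finset Bool))
      (fun _ b => if b then γ else 1 - γ)).symm
    rw [← Fintype.piFinset_univ, key]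
    have : ∑ b ∈ (Finset.univ : Finset Bool), (if b then γ else 1 - γ) = 1 := by
      rw [Fintype.sum_bool]; norm_num
    simp [this]
  calc ∑ I : Fin d → Fin ℓ, ∑ p : Fin d → Bool, W ℓ d γ (I, p)
      = (∑ I : Fin d → Fin ℓ,
          (if Function.Injective I then (1 : ℝ) / (Nat.descFactorial ℓ d) else 0)) *
        (∑ p : Fin d → Bool, ∏ i, (if p i then γ else 1 - γ)) := by
        rw [Finset.sum_mul_sum]; rfl
    _ = 1 := by rw [h1, h2, mul_one]

lemma measurableSet_cyl (n : ℕ) (c : ℕ → E ℓ d) :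
    MeasurableSet {ω : ℕ → E ℓ d | ∀ j < n, ω j = c j} := by
  have : {ω : ℕ → E ℓ d | ∀ j < n, ω j = c j}
      = ⋂ j ∈ Set.Iio n, (fun ω : ℕ → E ℓ d => ω j) ⁻¹' {c j} := by
    ext ω; simp [Set.mem_iInter]
  rw [this]
  exact MeasurableSet.biInter (Set.to_countable _) fun j _ =>
    (measurable_pi_apply j) (measurableSet_singleton _)

variable (hd : 0 < d) (hdℓ : d ≤ ℓ) (hγ0 : 0 ≤ γ) (hγ1 : γ ≤ 1)
variable (μ : Measure (ℕ → E ℓ d))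
variable (hiid : ∀ (n : ℕ) (a : ℕ → E ℓ d), μ {ω | ∀ j < n, ω j = a j}
      = ENNReal.ofReal (∏ j ∈ Finset.range n, W ℓ d γ (a j)))

include hd hdℓ hγ0 hγ1 hiid

lemma measure_pi_cyl (n : ℕ) (S : ℕ → Finset (E ℓ d)) :
    μ {ω | ∀ j < n, ω j ∈ S j}
      = ENNReal.ofReal (∏ j ∈ Finset.range n, ∑ x ∈ S j, W ℓ d γ x) := by
  haveI : Nonempty (Fin ℓ) := ⟨⟨0, lt_of_lt_of_le hd hdℓ⟩⟩
  classical
  set ext : (Fin n → E ℓ d) → ℕ → E ℓ d :=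
    fun t j => if h : j < n then t ⟨j, h⟩ else Classical.arbitrary _ with hext
  have hset : {ω : ℕ → E ℓ d | ∀ j < n, ω j ∈ S j}
      = ⋃ t ∈ Fintype.piFinset (fun j : Fin n => S j),
          {ω | ∀ j < n, ω j = ext t j} := by
    ext ω
    simp only [Set.mem_setOf_eq, Set.mem_iUnion, Fintype.mem_piFinset]
    constructor
    · intro h
      refine ⟨fun j => ω j, fun j => h j j.2, fun j hj => ?_⟩
      simp [hext, hj]
    · rintro ⟨t, ht, hω⟩ j hj
      rw [hω j hj]
      simpa [hext, hj] using ht ⟨j, hj⟩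
  have hdisj : (↑(Fintype.piFinset (fun j : Fin n => S j)) :
      Set (Fin n → E ℓ d)).PairwiseDisjoint
      (fun t => {ω : ℕ → E ℓ d | ∀ j < n, ω j = ext t j}) := by
    intro t _ t' _ hne
    refine Set.disjoint_left.2 fun ω h1 h2 => hne ?_
    funext j
    have e1 := h1 j j.2
    have e2 := h2 j j.2
    have : ext t j = ext t' j := by rw [← e1, e2]
    simpa [hext, j.2] using this
  rw [hset, measure_biUnion_finset hdisj (fun t _ => measurableSet_cyl n (ext t))]
  have hprod : ∀ t : Fin n → E ℓ d,
      ∏ j ∈ Finset.range n, W ℓ d γ (ext t j) = ∏ j : Fin n, W ℓ d γ (t j) := by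
    intro t
    rw [← Fin.prod_univ_eq_prod_range (fun j => W ℓ d γ (ext t j)) n]
    exact Finset.prod_congr rfl fun j _ => by simp [hext, j.2]
  calc ∑ t ∈ Fintype.piFinset (fun j : Fin n => S j),
        μ {ω | ∀ j < n, ω j = ext t j}
      = ∑ t ∈ Fintype.piFinset (fun j : Fin n => S j),
        ENNReal.ofReal (∏ j : Fin n, W ℓ d γ (t j)) := by
        exact Finset.sum_congr rfl fun t _ => by rw [hiid n (ext t), hprod t]
    _ = ENNReal.ofReal (∑ t ∈ Fintype.piFinset (fun j : Fin n => S j),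
          ∏ j : Fin n, W ℓ d γ (t j)) := by
        rw [ENNReal.ofReal_sum_of_nonneg]
        intro t _
        exact Finset.prod_nonneg fun j _ => W_nonneg hγ0 hγ1 _
    _ = ENNReal.ofReal (∏ j : Fin n, ∑ x ∈ S j, W ℓ d γ x) := by
        rw [Finset.prod_univ_sum]
    _ = ENNReal.ofReal (∏ j ∈ Finset.range n, ∑ x ∈ S j, W ℓ d γ x) := by
        rw [Fin.prod_univ_eq_prod_range (fun j => ∑ x ∈ S j, W ℓ d γ x) n]

lemma measure_single (k : ℕ) (A : Finset (E ℓ d)) :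
    μ ((fun ω : ℕ → E ℓ d => ω k) ⁻¹' ↑A) = ENNReal.ofReal (∑ x ∈ A, W ℓ d γ x) := by
  classical
  have hset : ((fun ω : ℕ → E ℓ d => ω k) ⁻¹' ↑A)
      = {ω | ∀ j < k + 1, ω j ∈ (if j = k then A else Finset.univ)} := by
    ext ω
    simp only [Set.mem_preimage, Finset.mem_coe, Set.mem_setOf_eq]
    constructor
    · intro h j hj
      by_cases hjk : j = k
      · subst hjk; simpa using h
      · simp [hjk]
    · intro h
      have := h k (Nat.lt_succ_self k)
      simpa using this
  rw [hset, measure_pi_cyl hd hdℓ hγ0 hγ1 μ hiid]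
  congr 1
  rw [Finset.prod_eq_single_of_mem k (Finset.self_mem_range_succ k)]
  · simp
  · intro b _ hbk
    simp [hbk, W_sum_one hdℓ]

lemma measure_pair (k l : ℕ) (hkl : k ≠ l) (A B : Finset (E ℓ d)) :
    μ (((fun ω : ℕ → E ℓ d => ω k) ⁻¹' ↑A) ∩ ((fun ω : ℕ → E ℓ d => ω l) ⁻¹' ↑B))
      = ENNReal.ofReal ((∑ x ∈ A, W ℓ d γ x) * (∑ x ∈ B, W ℓ d γ x)) := by
  classical
  set n := max k l + 1 with hn
  have hk : k < n := lt_of_le_of_lt (le_max_left k l) (Nat.lt_succ_self _)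
  have hl : l < n := lt_of_le_of_lt (le_max_right k l) (Nat.lt_succ_self _)
  have hset : (((fun ω : ℕ → E ℓ d => ω k) ⁻¹' ↑A) ∩ ((fun ω : ℕ → E ℓ d => ω l) ⁻¹' ↑B))
      = {ω | ∀ j < n, ω j ∈ (if j = k then A else if j = l then B else Finset.univ)} := by
    ext ω
    simp only [Set.mem_inter_iff, Set.mem_preimage, Finset.mem_coe, Set.mem_setOf_eq]
    constructor
    · rintro ⟨h1, h2⟩ j hj
      by_cases hjk : j = k
      · subst hjk; simpa using h1
      · by_cases hjl : j = l
        · subst hjl; simp [hjk]; exact h2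
        · simp [hjk, hjl]
    · intro h
      refine ⟨by simpa using h k hk, ?_⟩
      have := h l hl
      simpa [Ne.symm hkl] using this
  rw [hset, measure_pi_cyl hd hdℓ hγ0 hγ1 μ hiid]
  congr 1
  have hsub : ({k, l} : Finset ℕ) ⊆ Finset.range n := by
    intro x hx
    rcases Finset.mem_insert.1 hx with h | h
    · subst h; exact Finset.mem_range.2 hk
    · rw [Finset.mem_singleton.1 h]; exact Finset.mem_range.2 hl
  rw [← Finset.prod_subset hsub (fun x _ hx => ?_), Finset.prod_pair hkl]
  · congr 1
    · simp
    · simp [Ne.symm hkl]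
  · have hxk : x ≠ k := fun h => hx (by simp [h])
    have hxl : x ≠ l := fun h => hx (by simp [h])
    simp [hxk, hxl, W_sum_one hdℓ]



lemma indep_comp (X : E ℓ d → ℝ) {k l : ℕ} (hkl : k ≠ l) :
    IndepFun (fun ω : ℕ → E ℓ d => X (ω k)) (fun ω => X (ω l)) μ := by
  classical
  have hbase : IndepFun (fun ω : ℕ → E ℓ d => ω k) (fun ω => ω l) μ := by
    rw [indepFun_iff_measure_inter_preimage_eq_mul]
    intro s t _ _
    have hA : ((fun ω : ℕ → E ℓ d => ω k) ⁻¹' s)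
        = ((fun ω : ℕ → E ℓ d => ω k) ⁻¹' ↑s.toFinset) := by rw [Set.coe_toFinset]
    have hB : ((fun ω : ℕ → E ℓ d => ω l) ⁻¹' t)
        = ((fun ω : ℕ → E ℓ d => ω l) ⁻¹' ↑t.toFinset) := by rw [Set.coe_toFinset]
    rw [hA, hB, measure_pair hd hdℓ hγ0 hγ1 μ hiid k l hkl,
      measure_single hd hdℓ hγ0 hγ1 μ hiid,
      measure_single hd hdℓ hγ0 hγ1 μ hiid,
      ENNReal.ofReal_mul (Finset.sum_nonneg fun x _ => W_nonneg hγ0 hγ1 x)]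
  exact hbase.comp (measurable_of_finite X) (measurable_of_finite X)

lemma identDistrib_comp (X : E ℓ d → ℝ) (k : ℕ) :
    IdentDistrib (fun ω : ℕ → E ℓ d => X (ω k)) (fun ω => X (ω 0)) μ μ := by
  classical
  have hm : ∀ j : ℕ, Measurable (fun ω : ℕ → E ℓ d => X (ω j)) := fun j =>
    (measurable_of_finite X).comp (measurable_pi_apply j)
  refine ⟨(hm k).aemeasurable, (hm 0).aemeasurable, ?_⟩
  apply Measure.ext; intro s hs
  rw [Measure.map_apply (hm k) hs, Measure.map_apply (hm 0) hs]
  have hpre : ∀ j : ℕ, (fun ω : ℕ → E ℓ d => X (ω j)) ⁻¹' s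
      = (fun ω : ℕ → E ℓ d => ω j) ⁻¹' ↑(X ⁻¹' s).toFinset := by
    intro j; rw [Set.coe_toFinset]; rfl
  rw [hpre k, hpre 0, measure_single hd hdℓ hγ0 hγ1 μ hiid,
    measure_single hd hdℓ hγ0 hγ1 μ hiid]

omit hd hdℓ hγ0 hγ1 hiid in
lemma integrable_comp [IsProbabilityMeasure μ] (X : E ℓ d → ℝ) (k : ℕ) :
    Integrable (fun ω : ℕ → E ℓ d => X (ω k)) μ := by
  have hm : Measurable (fun ω : ℕ → E ℓ d => X (ω k)) :=
    (measurable_of_finite X).comp (measurable_pi_apply k)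
  refine (integrable_const (∑ a : E ℓ d, ‖X a‖)).mono' hm.aestronglyMeasurable
    (ae_of_all _ fun ω => ?_)
  exact Finset.single_le_sum (fun a _ => norm_nonneg (X a)) (Finset.mem_univ (ω k))

lemma integral_comp [IsProbabilityMeasure μ] (X : E ℓ d → ℝ) :
    ∫ ω, X (ω 0) ∂μ = ∑ a, W ℓ d γ a * X a := by
  classical
  haveI := Measure.isProbabilityMeasure_map (μ := μ) (f := fun ω : ℕ → E ℓ d => ω 0)
    (measurable_pi_apply 0).aemeasurable
  rw [← integral_map (measurable_pi_apply 0).aemeasurable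
    (measurable_of_finite X).aestronglyMeasurable,
    integral_fintype (Integrable.of_finite)]
  refine Finset.sum_congr rfl fun a _ => ?_
  rw [smul_eq_mul, measureReal_def, Measure.map_apply (measurable_pi_apply 0) (measurableSet_singleton a)]
  have hpre : (fun ω : ℕ → E ℓ d => ω 0) ⁻¹' {a}
      = (fun ω : ℕ → E ℓ d => ω 0) ⁻¹' ↑({a} : Finset (E ℓ d)) := by simp
  rw [hpre, measure_single hd hdℓ hγ0 hγ1 μ hiid, Finset.sum_singleton,
    ENNReal.toReal_ofReal (W_nonneg hγ0 hγ1 a), mul_comm]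

lemma ae_false_of_gamma_zero (hγz : γ = 0) :
    ∀ᵐ ω ∂μ, ∀ (j : ℕ) (i : Fin d), (ω j).2 i = false := by
  classical
  have hnull : ∀ (j : ℕ) (i : Fin d), μ {ω : ℕ → E ℓ d | (ω j).2 i = true} = 0 := by
    intro j i
    have hset : {ω : ℕ → E ℓ d | (ω j).2 i = true}
        = (fun ω : ℕ → E ℓ d => ω j) ⁻¹'
            ↑(Finset.univ.filter fun a : E ℓ d => a.2 i = true) := by
      ext ω; simp
    rw [hset, measure_single hd hdℓ hγ0 hγ1 μ hiid]
    have hz : ∑ x ∈ (Finset.univ.filter fun a : E ℓ d => a.2 i = true), W ℓ d γ x = 0 := by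
      refine Finset.sum_eq_zero fun a ha => ?_
      have hai : a.2 i = true := (Finset.mem_filter.1 ha).2
      unfold W
      rw [Finset.prod_eq_zero (Finset.mem_univ i) (by simp [hai, hγz]), mul_zero]
    rw [hz, ENNReal.ofReal_zero]
  have hun : μ (⋃ (j : ℕ), ⋃ (i : Fin d), {ω : ℕ → E ℓ d | (ω j).2 i = true}) = 0 :=
    measure_iUnion_null fun j => measure_iUnion_null fun i => hnull j i
  rw [ae_iff]
  refine measure_mono_null (fun ω hω => ?_) hun
  simp only [Set.mem_setOf_eq, not_forall] at hω
  obtain ⟨j, i, hji⟩ := hω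
  refine Set.mem_iUnion.2 ⟨j, Set.mem_iUnion.2 ⟨i, ?_⟩⟩
  simp only [Set.mem_setOf_eq]
  exact Bool.not_eq_false _ |>.mp hji


omit hd hdℓ hγ0 hγ1 hiid

/-- The per-query increment of `δ v' - δ vadv` as a function of the query outcome. -/
noncomputable def Xf (ℓ d : ℕ) (e : Fin ℓ → Bool) (a : E ℓ d) : ℝ :=
  ∑ i, (if e (a.1 i) then 1 - 2 * (if a.2 i then (1 : ℝ) else 0) else 0)

lemma Xf_expect_pos {ℓ d : ℕ} (hd : 0 < d) (hdℓ : d ≤ ℓ) {γ : ℝ}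
    (hγ0 : 0 ≤ γ) (hγ : γ < 1 / 2) (e : Fin ℓ → Bool) (i₀ : Fin ℓ) (hi₀ : e i₀ = true) :
    0 < ∑ a : E ℓ d, W ℓ d γ a * Xf ℓ d e a := by
  classical
  have hdesc : (0 : ℕ) < Nat.descFactorial ℓ d := by
    rcases Nat.eq_zero_or_pos (Nat.descFactorial ℓ d) with h | h
    · exact absurd (Nat.descFactorial_eq_zero_iff_lt.1 h) (not_lt.2 hdℓ)
    · exact h
  -- inner expectation over p for a fixed bit position i
  have inner : ∀ i : Fin d,
      ∑ p : Fin d → Bool, (∏ i', (if p i' then γ else 1 - γ))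
        * (1 - 2 * (if p i then (1 : ℝ) else 0)) = 1 - 2 * γ := by
    intro i
    have hrw : ∀ p : Fin d → Bool,
        (∏ i', (if p i' then γ else 1 - γ)) * (1 - 2 * (if p i then (1 : ℝ) else 0))
        = ∏ i', ((if p i' then γ else 1 - γ)
            * (if i' = i then (1 - 2 * (if p i' then (1 : ℝ) else 0)) else 1)) := by
      intro p
      rw [Finset.prod_mul_distrib]
      congr 1
      rw [Finset.prod_ite_eq' Finset.univ i
        (fun i' => (1 - 2 * (if p i' then (1 : ℝ) else 0)))]
      simp
    calc ∑ p : Fin d → Bool, (∏ i', (if p i' then γ else 1 - γ))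
          * (1 - 2 * (if p i then (1 : ℝ) else 0))
        = ∑ p ∈ Fintype.piFinset (fun _ : Fin d => (Finset.univ : Finset Bool)),
            ∏ i', ((if p i' then γ else 1 - γ)
              * (if i' = i then (1 - 2 * (if p i' then (1 : ℝ) else 0)) else 1)) := by
          rw [Fintype.piFinset_univ]
          exact Finset.sum_congr rfl fun p _ => hrw p
      _ = ∏ i', ∑ b ∈ (Finset.univ : Finset Bool),
            ((if b then γ else 1 - γ)
              * (if i' = i then (1 - 2 * (if b then (1 : ℝ) else 0)) else 1)) :=
          (Finset.prod_univ_sum (fun _ : Fin d => (Finset.univ : Finset Bool))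
            (fun i' b => (if b then γ else 1 - γ)
              * (if i' = i then (1 - 2 * (if b then (1 : ℝ) else 0)) else 1))).symm
      _ = ∏ i' : Fin d, (if i' = i then 1 - 2 * γ else 1) := by
          refine Finset.prod_congr rfl fun i' _ => ?_
          by_cases h : i' = i <;> simp [h, Fintype.sum_bool] <;> ring
      _ = 1 - 2 * γ := by
          rw [Finset.prod_ite_eq' Finset.univ i (fun _ => (1 : ℝ) - 2 * γ)]
          simp
  -- expand the full sum
  have hexpand : ∑ a : E ℓ d, W ℓ d γ a * Xf ℓ d e a
      = ∑ I : Fin d → Fin ℓ,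
          (if Function.Injective I then (1 : ℝ) / (Nat.descFactorial ℓ d) else 0)
          * ∑ i, (if e (I i) then 1 - 2 * γ else 0) := by
    rw [Fintype.sum_prod_type]
    refine Finset.sum_congr rfl fun I _ => ?_
    have step : ∀ p : Fin d → Bool, W ℓ d γ (I, p) * Xf ℓ d e (I, p)
        = (if Function.Injective I then (1 : ℝ) / (Nat.descFactorial ℓ d) else 0)
          * ∑ i, (if e (I i) then
              (∏ i', (if p i' then γ else 1 - γ)) * (1 - 2 * (if p i then (1 : ℝ) else 0))
            else 0) := by
      intro p
      unfold W Xf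
      simp only [mul_assoc, Finset.mul_sum]
      refine Finset.sum_congr rfl fun i _ => ?_
      by_cases h : e (I i) <;> simp [h]
    calc ∑ p : Fin d → Bool, W ℓ d γ (I, p) * Xf ℓ d e (I, p)
        = ∑ p : Fin d → Bool,
            (if Function.Injective I then (1 : ℝ) / (Nat.descFactorial ℓ d) else 0)
            * ∑ i, (if e (I i) then
                (∏ i', (if p i' then γ else 1 - γ)) * (1 - 2 * (if p i then (1 : ℝ) else 0))
              else 0) := Finset.sum_congr rfl fun p _ => step p
      _ = (if Function.Injective I then (1 : ℝ) / (Nat.descFactorial ℓ d) else 0)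
            * ∑ p : Fin d → Bool, ∑ i, (if e (I i) then
                (∏ i', (if p i' then γ else 1 - γ)) * (1 - 2 * (if p i then (1 : ℝ) else 0))
              else 0) := (Finset.mul_sum _ _ _).symm
      _ = (if Function.Injective I then (1 : ℝ) / (Nat.descFactorial ℓ d) else 0)
            * ∑ i, ∑ p : Fin d → Bool, (if e (I i) then
                (∏ i', (if p i' then γ else 1 - γ)) * (1 - 2 * (if p i then (1 : ℝ) else 0))
              else 0) := by rw [Finset.sum_comm]
      _ = (if Function.Injective I then (1 : ℝ) / (Nat.descFactorial ℓ d) else 0)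
            * ∑ i, (if e (I i) then 1 - 2 * γ else 0) := by
          congr 1
          refine Finset.sum_congr rfl fun i _ => ?_
          by_cases h : e (I i)
          · simp only [h, if_true]
            exact inner i
          · simp [h]
  rw [hexpand]
  -- strict positivity
  have hterm_nonneg : ∀ I : Fin d → Fin ℓ,
      0 ≤ (if Function.Injective I then (1 : ℝ) / (Nat.descFactorial ℓ d) else 0)
          * ∑ i, (if e (I i) then 1 - 2 * γ else 0) := by
    intro I
    apply mul_nonneg
    · positivity
    · exact Finset.sum_nonneg fun i _ => by split <;> linarith
  -- the witness injective function hitting i₀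
  set z : Fin d := ⟨0, hd⟩ with hz
  set I₀ : Fin d → Fin ℓ :=
    fun j => (Equiv.swap (Fin.castLE hdℓ z) i₀) (Fin.castLE hdℓ j) with hI₀
  have hinj : Function.Injective I₀ :=
    (Equiv.injective _).comp (Fin.castLE_injective hdℓ)
  have hhit : I₀ z = i₀ := by
    simp [hI₀, Equiv.swap_apply_left]
  refine Finset.sum_pos' (fun I _ => hterm_nonneg I) ⟨I₀, Finset.mem_univ I₀, ?_⟩
  rw [if_pos hinj]
  apply mul_pos
  · positivity
  · refine Finset.sum_pos' (fun i _ => by split <;> linarith)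
      ⟨z, Finset.mem_univ z, ?_⟩
    rw [hhit, hi₀, if_pos rfl]
    linarith


lemma hamming_diff {ℓ d : ℕ} (vadv v' : Fin ℓ → Bool) (a : E ℓ d) :
    (hammingDist (fun i => v' (a.1 i)) (fun i => xor (a.2 i) (vadv (a.1 i))) : ℝ)
      - (hammingDist (fun i => vadv (a.1 i)) (fun i => xor (a.2 i) (vadv (a.1 i))) : ℝ)
    = Xf ℓ d (fun i => xor (v' i) (vadv i)) a := by
  classical
  have hcast : ∀ v : Fin ℓ → Bool,
      (hammingDist (fun i => v (a.1 i)) (fun i => xor (a.2 i) (vadv (a.1 i))) : ℝ)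
      = ∑ i, (if v (a.1 i) ≠ xor (a.2 i) (vadv (a.1 i)) then (1 : ℝ) else 0) := by
    intro v
    rw [hammingDist, Finset.card_filter]
    push_cast
    rfl
  rw [hcast, hcast, Xf, ← Finset.sum_sub_distrib]
  refine Finset.sum_congr rfl fun i _ => ?_
  cases h1 : v' (a.1 i) <;> cases h2 : vadv (a.1 i) <;> cases h3 : a.2 i <;>
    simp [h1, h2, h3] <;> norm_num


/-- The accumulated distance statistic. -/
def DD (ℓ d : ℕ) (vadv : Fin ℓ → Bool) (ω : ℕ → E ℓ d) (q : ℕ) (v : Fin ℓ → Bool) : ℕ :=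
  ∑ j ∈ Finset.range q, hammingDist (fun i => v ((ω j).1 i))
    (fun i => xor ((ω j).2 i) (vadv ((ω j).1 i)))

lemma DD_le {ℓ d : ℕ} (vadv : Fin ℓ → Bool) (ω : ℕ → E ℓ d) (q : ℕ) (v : Fin ℓ → Bool) :
    DD ℓ d vadv ω q v ≤ q * d := by
  calc DD ℓ d vadv ω q v ≤ ∑ _j ∈ Finset.range q, d :=
        Finset.sum_le_sum fun j _ =>
          le_of_le_of_eq hammingDist_le_card_fintype (Fintype.card_fin d)
    _ = q * d := by rw [Finset.sum_const, Finset.card_range, smul_eq_mul]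

lemma DD_diff {ℓ d : ℕ} (vadv : Fin ℓ → Bool) (ω : ℕ → E ℓ d) (q : ℕ) (v' : Fin ℓ → Bool) :
    (DD ℓ d vadv ω q v' : ℝ) - (DD ℓ d vadv ω q vadv : ℝ)
      = ∑ j ∈ Finset.range q, Xf ℓ d (fun i => xor (v' i) (vadv i)) (ω j) := by
  unfold DD
  push_cast
  rw [← Finset.sum_sub_distrib]
  exact Finset.sum_congr rfl fun j _ => hamming_diff vadv v' (ω j)

end Stmt19Aux

open MeasureTheory Filter

/-- The averaging attack: with the `q`-query posterior formula for repeated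
embeddings of the same image (true hash `v_adv`, so each query independently
samples `d` of the `ℓ` indices uniformly without replacement and flips each
selected bit of `v_adv` independently with probability `γ < 1/2`), if the
prior `Df` assigns positive probability to `v_adv` and to at least one other
hash, then under any i.i.d. sequence measure `μ` for the queries, almost
surely — provided every index is sampled infinitely often — the posterior
`Pr[F(w) = v_adv | (I_1,p_1),…,(I_q,p_q)]` converges to `1` as `q → ∞`. -/
theorem stmt19 (ℓ d : ℕ) (hd : 0 < d) (hdℓ : d ≤ ℓ)
    (γ : ℝ) (hγ0 : 0 ≤ γ) (hγ : γ < 1 / 2)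
    (Df : (Fin ℓ → Bool) → ℝ) (hDf0 : ∀ x, 0 ≤ Df x) (hDf1 : ∑ x, Df x = 1)
    (vadv : Fin ℓ → Bool) (hpos : 0 < Df vadv)
    (hother : ∃ v' : (Fin ℓ → Bool), v' ≠ vadv ∧ 0 < Df v')
    (μ : Measure (ℕ → (Fin d → Fin ℓ) × (Fin d → Bool)))
    [IsProbabilityMeasure μ]
    (hiid : ∀ (n : ℕ) (a : ℕ → (Fin d → Fin ℓ) × (Fin d → Bool)),
      μ {ω | ∀ j < n, ω j = a j}
        = ENNReal.ofReal (∏ j ∈ Finset.range n,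
            (if Function.Injective (a j).1 then
                (1 : ℝ) / (Nat.descFactorial ℓ d) else 0) *
              ∏ i, (if (a j).2 i then γ else 1 - γ))) :
    ∀ᵐ ω ∂μ,
      (∀ i : Fin ℓ, ∀ N : ℕ, ∃ j ≥ N, ∃ idx : Fin d, (ω j).1 idx = i) →
      Tendsto
        (fun q =>
          let δ : (Fin ℓ → Bool) → ℕ := fun v =>
            ∑ j ∈ Finset.range q,
              hammingDist (fun i => v ((ω j).1 i))
                (fun i => xor ((ω j).2 i) (vadv ((ω j).1 i)))
          γ ^ δ vadv * (1 - γ) ^ (q * d - δ vadv) * Df vadv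
            / (∑ v' : Fin ℓ → Bool,
                γ ^ δ v' * (1 - γ) ^ (q * d - δ v') * Df v'))
        atTop (nhds 1) := by
  classical
  have hγ1 : γ ≤ 1 := by linarith
  have h1γ : (0 : ℝ) < 1 - γ := by linarith
  have hiidW : ∀ (n : ℕ) (a : ℕ → Stmt19Aux.E ℓ d), μ {ω | ∀ j < n, ω j = a j}
      = ENNReal.ofReal (∏ j ∈ Finset.range n, Stmt19Aux.W ℓ d γ (a j)) := by
    intro n a
    simpa only [Stmt19Aux.W] using hiid n a
  by_cases hγz : γ = 0
  · -- γ = 0 : eventually the posterior is exactly 1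
    filter_upwards [Stmt19Aux.ae_false_of_gamma_zero hd hdℓ hγ0 hγ1 μ hiidW hγz] with ω hfalse
    intro hio
    have hvadv0 : ∀ q, Stmt19Aux.DD ℓ d vadv ω q vadv = 0 := by
      intro q
      refine Finset.sum_eq_zero fun j _ => ?_
      have hxr : (fun i => xor ((ω j).2 i) (vadv ((ω j).1 i)))
          = fun i => vadv ((ω j).1 i) := by
        funext i; rw [hfalse j i, Bool.false_xor]
      rw [hxr, hammingDist_self]
    have hhit : ∀ v' : Fin ℓ → Bool, v' ≠ vadv →
        ∃ m : ℕ, ∀ q ≥ m, 0 < Stmt19Aux.DD ℓ d vadv ω q v' := by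
      intro v' hv
      obtain ⟨i1, hi1⟩ := Function.ne_iff.1 hv
      obtain ⟨j, -, idx, hidx⟩ := hio i1 0
      refine ⟨j + 1, fun q hq => ?_⟩
      have hterm : 0 < hammingDist (fun i => v' ((ω j).1 i))
          (fun i => xor ((ω j).2 i) (vadv ((ω j).1 i))) := by
        rw [hammingDist_pos]
        intro hcontra
        have hc := congrFun hcontra idx
        rw [hidx, hfalse j idx, Bool.false_xor] at hc
        exact hi1 hc
      exact lt_of_lt_of_le hterm
        (Finset.single_le_sum (f := fun j => hammingDist (fun i => v' ((ω j).1 i))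
          (fun i => xor ((ω j).2 i) (vadv ((ω j).1 i))))
          (fun _ _ => Nat.zero_le _) (Finset.mem_range.2 hq))
    choose m hm using hhit
    set M : ℕ := Finset.univ.sup
      (fun v' : Fin ℓ → Bool => if h : v' = vadv then 0 else m v' h) with hM
    have hev : (fun q => γ ^ Stmt19Aux.DD ℓ d vadv ω q vadv
          * (1 - γ) ^ (q * d - Stmt19Aux.DD ℓ d vadv ω q vadv) * Df vadv
        / (∑ v' : Fin ℓ → Bool, γ ^ Stmt19Aux.DD ℓ d vadv ω q v'
            * (1 - γ) ^ (q * d - Stmt19Aux.DD ℓ d vadv ω q v') * Df v'))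
        =ᶠ[atTop] fun _ => (1 : ℝ) := by
      filter_upwards [eventually_ge_atTop M] with q hq
      have hnum : γ ^ Stmt19Aux.DD ℓ d vadv ω q vadv
          * (1 - γ) ^ (q * d - Stmt19Aux.DD ℓ d vadv ω q vadv) * Df vadv = Df vadv := by
        rw [hvadv0 q, hγz, pow_zero]
        norm_num
      have hden : (∑ v' : Fin ℓ → Bool, γ ^ Stmt19Aux.DD ℓ d vadv ω q v'
          * (1 - γ) ^ (q * d - Stmt19Aux.DD ℓ d vadv ω q v') * Df v') = Df vadv := by
        rw [Finset.sum_eq_single vadv]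
        · exact hnum
        · intro v' _ hv
          have hle : m v' hv ≤ q := by
            refine le_trans ?_ hq
            have hsup := Finset.le_sup (f := fun v' : Fin ℓ → Bool =>
              if h : v' = vadv then 0 else m v' h) (Finset.mem_univ v')
            simp only [dif_neg hv] at hsup
            exact hsup
          have hp := hm v' hv q hle
          rw [hγz, zero_pow hp.ne']
          ring
        · intro h; exact absurd (Finset.mem_univ vadv) h
      show γ ^ Stmt19Aux.DD ℓ d vadv ω q vadv
          * (1 - γ) ^ (q * d - Stmt19Aux.DD ℓ d vadv ω q vadv) * Df vadv
        / (∑ v' : Fin ℓ → Bool, γ ^ Stmt19Aux.DD ℓ d vadv ω q v'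
            * (1 - γ) ^ (q * d - Stmt19Aux.DD ℓ d vadv ω q v') * Df v') = 1
      rw [hnum, hden, div_self hpos.ne']
    exact Filter.Tendsto.congr' hev.symm tendsto_const_nhds
  · -- γ > 0
    have hγpos : (0 : ℝ) < γ := lt_of_le_of_ne hγ0 (Ne.symm hγz)
    have hae : ∀ᵐ ω ∂μ, ∀ v' : Fin ℓ → Bool, v' ≠ vadv →
        Tendsto (fun q : ℕ => ∑ j ∈ Finset.range q,
          Stmt19Aux.Xf ℓ d (fun i => xor (v' i) (vadv i)) (ω j)) atTop atTop := by
      rw [ae_all_iff]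
      intro v'
      by_cases hv : v' = vadv
      · exact Filter.Eventually.of_forall fun ω h => absurd hv h
      · obtain ⟨i1, hi1⟩ := Function.ne_iff.1 hv
        have he1 : (fun i => xor (v' i) (vadv i)) i1 = true := by
          simp only
          cases h1 : v' i1 <;> cases h2 : vadv i1 <;> simp_all
        have hc := Stmt19Aux.Xf_expect_pos hd hdℓ hγ0 hγ
          (fun i => xor (v' i) (vadv i)) i1 he1
        have hslln := ProbabilityTheory.strong_law_ae_real (μ := μ)
          (fun k ω => Stmt19Aux.Xf ℓ d (fun i => xor (v' i) (vadv i)) (ω k))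
          (Stmt19Aux.integrable_comp μ _ 0)
          (fun k l hkl => Stmt19Aux.indep_comp hd hdℓ hγ0 hγ1 μ hiidW _ hkl)
          (fun k => Stmt19Aux.identDistrib_comp hd hdℓ hγ0 hγ1 μ hiidW _ k)
        rw [Stmt19Aux.integral_comp hd hdℓ hγ0 hγ1 μ hiidW] at hslln
        filter_upwards [hslln] with ω hω _
        have hmul := Filter.Tendsto.pos_mul_atTop hc hω tendsto_natCast_atTop_atTop
        refine hmul.congr' ?_
        filter_upwards [eventually_ge_atTop 1] with n hn
        have hn0 : ((n : ℝ)) ≠ 0 := by positivity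
        rw [div_mul_cancel₀ _ hn0]
    filter_upwards [hae] with ω hω
    intro _hio
    set ρ : ℝ := γ / (1 - γ) with hρ
    have hρ0 : 0 < ρ := div_pos hγpos h1γ
    have hρ1 : ρ < 1 := (div_lt_one h1γ).2 (by linarith)
    have hA : ∀ (q : ℕ) (v : Fin ℓ → Bool),
        γ ^ Stmt19Aux.DD ℓ d vadv ω q v
          * (1 - γ) ^ (q * d - Stmt19Aux.DD ℓ d vadv ω q v)
        = (γ ^ Stmt19Aux.DD ℓ d vadv ω q vadv
            * (1 - γ) ^ (q * d - Stmt19Aux.DD ℓ d vadv ω q vadv))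
          * ρ ^ ((Stmt19Aux.DD ℓ d vadv ω q v : ℝ)
              - (Stmt19Aux.DD ℓ d vadv ω q vadv : ℝ)) := by
      intro q v
      have ha := Stmt19Aux.DD_le vadv ω q v
      have hb := Stmt19Aux.DD_le vadv ω q vadv
      rw [← Real.rpow_natCast γ (Stmt19Aux.DD ℓ d vadv ω q v),
        ← Real.rpow_natCast γ (Stmt19Aux.DD ℓ d vadv ω q vadv),
        ← Real.rpow_natCast (1 - γ) (q * d - Stmt19Aux.DD ℓ d vadv ω q v),
        ← Real.rpow_natCast (1 - γ) (q * d - Stmt19Aux.DD ℓ d vadv ω q vadv),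
        Nat.cast_sub ha, Nat.cast_sub hb,
        hρ, Real.div_rpow hγ0 h1γ.le,
        Real.rpow_sub hγpos, Real.rpow_sub h1γ, Real.rpow_sub h1γ,
        Real.rpow_sub h1γ]
      have g1 := (Real.rpow_pos_of_pos hγpos ((Stmt19Aux.DD ℓ d vadv ω q v : ℕ) : ℝ)).ne'
      have g2 := (Real.rpow_pos_of_pos hγpos ((Stmt19Aux.DD ℓ d vadv ω q vadv : ℕ) : ℝ)).ne'
      have g3 := (Real.rpow_pos_of_pos h1γ ((Stmt19Aux.DD ℓ d vadv ω q v : ℕ) : ℝ)).ne'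
      have g4 := (Real.rpow_pos_of_pos h1γ ((Stmt19Aux.DD ℓ d vadv ω q vadv : ℕ) : ℝ)).ne'
      have g5 := (Real.rpow_pos_of_pos h1γ (((q * d : ℕ) : ℝ))).ne'
      field_simp
    have hpost : ∀ q : ℕ,
        γ ^ Stmt19Aux.DD ℓ d vadv ω q vadv
          * (1 - γ) ^ (q * d - Stmt19Aux.DD ℓ d vadv ω q vadv) * Df vadv
        / (∑ v' : Fin ℓ → Bool, γ ^ Stmt19Aux.DD ℓ d vadv ω q v'
            * (1 - γ) ^ (q * d - Stmt19Aux.DD ℓ d vadv ω q v') * Df v')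
        = Df vadv / (∑ v' : Fin ℓ → Bool,
            ρ ^ ((Stmt19Aux.DD ℓ d vadv ω q v' : ℝ)
              - (Stmt19Aux.DD ℓ d vadv ω q vadv : ℝ)) * Df v') := by
      intro q
      have hAq : (0 : ℝ) < γ ^ Stmt19Aux.DD ℓ d vadv ω q vadv
          * (1 - γ) ^ (q * d - Stmt19Aux.DD ℓ d vadv ω q vadv) := by positivity
      have hdenrw : (∑ v' : Fin ℓ → Bool, γ ^ Stmt19Aux.DD ℓ d vadv ω q v'
            * (1 - γ) ^ (q * d - Stmt19Aux.DD ℓ d vadv ω q v') * Df v')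
          = (γ ^ Stmt19Aux.DD ℓ d vadv ω q vadv
              * (1 - γ) ^ (q * d - Stmt19Aux.DD ℓ d vadv ω q vadv))
            * ∑ v' : Fin ℓ → Bool,
              ρ ^ ((Stmt19Aux.DD ℓ d vadv ω q v' : ℝ)
                - (Stmt19Aux.DD ℓ d vadv ω q vadv : ℝ)) * Df v' := by
        rw [Finset.mul_sum]
        refine Finset.sum_congr rfl fun v' _ => ?_
        rw [hA q v', mul_assoc]
      rw [hdenrw, mul_div_mul_left _ _ hAq.ne']
    have hlimS : Tendsto (fun q : ℕ => ∑ v' : Fin ℓ → Bool,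
        ρ ^ ((Stmt19Aux.DD ℓ d vadv ω q v' : ℝ)
          - (Stmt19Aux.DD ℓ d vadv ω q vadv : ℝ)) * Df v') atTop (nhds (Df vadv)) := by
      have hsum : Df vadv = ∑ v' : Fin ℓ → Bool,
          (if v' = vadv then Df vadv else 0) := by
        rw [Finset.sum_ite_eq' Finset.univ vadv (fun _ => Df vadv)]
        simp
      rw [hsum]
      refine tendsto_finset_sum _ fun v' _ => ?_
      by_cases hv : v' = vadv
      · rw [if_pos hv]
        have heq : (fun q : ℕ => ρ ^ ((Stmt19Aux.DD ℓ d vadv ω q v' : ℝ)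
            - (Stmt19Aux.DD ℓ d vadv ω q vadv : ℝ)) * Df v') = fun _ => Df vadv := by
          funext q; rw [hv, sub_self, Real.rpow_zero, one_mul]
        rw [heq]
        exact tendsto_const_nhds
      · rw [if_neg hv]
        have hS : Tendsto (fun q : ℕ => (Stmt19Aux.DD ℓ d vadv ω q v' : ℝ)
            - (Stmt19Aux.DD ℓ d vadv ω q vadv : ℝ)) atTop atTop :=
          (hω v' hv).congr fun q => (Stmt19Aux.DD_diff vadv ω q v').symm
        have h0 : Tendsto (fun q : ℕ => ρ ^ ((Stmt19Aux.DD ℓ d vadv ω q v' : ℝ)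
            - (Stmt19Aux.DD ℓ d vadv ω q vadv : ℝ))) atTop (nhds 0) :=
          (tendsto_rpow_atTop_of_base_lt_one ρ (by linarith) hρ1).comp hS
        simpa using h0.mul_const (Df v')
    have hfinal : Tendsto (fun q : ℕ => Df vadv / (∑ v' : Fin ℓ → Bool,
        ρ ^ ((Stmt19Aux.DD ℓ d vadv ω q v' : ℝ)
          - (Stmt19Aux.DD ℓ d vadv ω q vadv : ℝ)) * Df v')) atTop
        (nhds (Df vadv / Df vadv)) :=
      Filter.Tendsto.div tendsto_const_nhds hlimS hpos.ne'
    rw [div_self hpos.ne'] at hfinal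
    exact hfinal.congr fun q => (hpost q).symm
end
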